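/- arXiv:1303.2362 — 2 statements merged into one kernel-verified Lean document; each statement's English description precedes it below -/
import Mathlib

section
/- For any positive integers x, y, r, R, the power series expansion of 1/((1-q^x)(1-q^y)(1-q^{rx+Ry})) - 1/((1-q^{rx})(1-q^{Ry})(1-q^{x+y})) has all coefficients nonnegative. -/
/-!
Put `s = q^x`, `t = q^y`, `u = s^r`, `v = t^R`. From `1 - st = (1-s)(1-t) + s(1-t) + t(1-s)`
one gets `1/((1-s)(1-t)) = (1 + s/(1-s) + t/(1-t)) / (1-st)`, and likewise for `u, v` with
`1 - uv`, so the difference equals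
`(s/(1-s) - u/(1-u) + t/(1-t) - v/(1-v)) / ((1-st)(1-uv))`.
Finally `s/(1-s) - s^r/(1-s^r) = (s + ⋯ + s^(r-1))/(1-s^r)`, and every factor now in sight has
nonnegative coefficients.
-/

open PowerSeries Finset

section CommRing

variable {A : Type*} [CommRing A] {s t a b c d e f : A}

theorem mul_eq_mul_one_add_of_one_sub_mul_eq_one (ha : (1 - s) * a = 1) (hb : (1 - t) * b = 1)
    (hc : (1 - s * t) * c = 1) : a * b = c * (1 + s * a + t * b) := by
  linear_combination (-a * b) * hc + c * b * ha + c * (1 + s * a) * hb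

theorem mul_sub_pow_mul_eq_geom_sum_mul {r : ℕ} (ha : (1 - s) * a = 1)
    (hd : (1 - s ^ r) * d = 1) : s * a - s ^ r * d = (∑ i ∈ Ico 1 r, s ^ i) * d := by
  obtain rfl | hr := r.eq_zero_or_pos
  · rw [Ico_eq_empty_of_le zero_le_one, sum_empty]
    linear_combination (d - s * a) * hd
  linear_combination (-s * a) * hd + (s ^ r * d + d * ∑ i ∈ Ico 1 r, s ^ i) * ha +
    a * d * geom_sum_Ico_mul s hr

theorem mul_mul_sub_mul_mul_eq_of_one_sub_mul_eq_one {r R : ℕ} (ha : (1 - s) * a = 1)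
    (hb : (1 - t) * b = 1) (hc : (1 - s ^ r * t ^ R) * c = 1) (hd : (1 - s ^ r) * d = 1)
    (he : (1 - t ^ R) * e = 1) (hf : (1 - s * t) * f = 1) :
    a * b * c - d * e * f =
      f * c * ((∑ i ∈ Ico 1 r, s ^ i) * d + (∑ j ∈ Ico 1 R, t ^ j) * e) := by
  rw [mul_eq_mul_one_add_of_one_sub_mul_eq_one ha hb hf,
    mul_eq_mul_one_add_of_one_sub_mul_eq_one hd he hc,
    ← mul_sub_pow_mul_eq_geom_sum_mul ha hd, ← mul_sub_pow_mul_eq_geom_sum_mul hb he]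
  ring

end CommRing

namespace PowerSeries

section OrderedSemiring

variable (R : Type*) [CommSemiring R] [PartialOrder R] [IsOrderedRing R]

def nonnegCoeffSubsemiring : Subsemiring R⟦X⟧ where
  carrier := {φ | ∀ n, 0 ≤ coeff n φ}
  mul_mem' {φ ψ} hφ hψ n := by
    rw [coeff_mul]
    exact sum_nonneg fun p _ => mul_nonneg (hφ p.1) (hψ p.2)
  one_mem' n := by
    rw [coeff_one]
    split_ifs <;> simp
  add_mem' hφ hψ n := by
    rw [map_add]
    exact add_nonneg (hφ n) (hψ n)
  zero_mem' n := by simp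

variable {R}

theorem mem_nonnegCoeffSubsemiring {φ : R⟦X⟧} :
    φ ∈ nonnegCoeffSubsemiring R ↔ ∀ n, 0 ≤ coeff n φ := Iff.rfl

theorem X_mem_nonnegCoeffSubsemiring : X ∈ nonnegCoeffSubsemiring R := by
  refine mem_nonnegCoeffSubsemiring.mpr fun n => ?_
  rw [coeff_X]
  split_ifs <;> simp

end OrderedSemiring

section Field

variable {k : Type*} [Field k] {a : ℕ}

theorem one_sub_X_pow_mul_inv (ha : a ≠ 0) : (1 - X ^ a : k⟦X⟧) * (1 - X ^ a)⁻¹ = 1 :=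
  PowerSeries.mul_inv_cancel _ (by simp [ha])

theorem inv_one_sub_X_pow_eq_expand (ha : a ≠ 0) :
    (1 - X ^ a : k⟦X⟧)⁻¹ = expand a ha (mk 1) := by
  symm
  rw [eq_inv_iff_mul_eq_one (by simp [ha])]
  simpa using congr(expand a ha $(mk_one_mul_one_sub_eq_one (S := k)))

theorem inv_one_sub_X_pow_mem_nonnegCoeffSubsemiring [LinearOrder k] [IsStrictOrderedRing k]
    (ha : a ≠ 0) : (1 - X ^ a : k⟦X⟧)⁻¹ ∈ nonnegCoeffSubsemiring k := by
  refine mem_nonnegCoeffSubsemiring.mpr fun n => ?_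
  rw [inv_one_sub_X_pow_eq_expand ha, coeff_expand]
  split_ifs <;> simp

end Field

end PowerSeries

theorem dominant_xy_L1 (x y r R : ℕ) (hx : 0 < x) (hy : 0 < y)
    (hr : 0 < r) (hR : 0 < R) (n : ℕ) :
    0 ≤ PowerSeries.coeff n
      (((1 - (X : ℚ⟦X⟧) ^ x) * (1 - X ^ y) * (1 - X ^ (r * x + R * y)))⁻¹ -
       ((1 - (X : ℚ⟦X⟧) ^ (r * x)) * (1 - X ^ (R * y)) * (1 - X ^ (x + y)))⁻¹) := by
  have hinv {a : ℕ} (ha : 0 < a) : (1 - X ^ a : ℚ⟦X⟧) * (1 - X ^ a)⁻¹ = 1 :=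
    one_sub_X_pow_mul_inv ha.ne'
  have hmem {a : ℕ} (ha : 0 < a) : (1 - X ^ a : ℚ⟦X⟧)⁻¹ ∈ nonnegCoeffSubsemiring ℚ :=
    inv_one_sub_X_pow_mem_nonnegCoeffSubsemiring ha.ne'
  have key := mul_mul_sub_mul_mul_eq_of_one_sub_mul_eq_one (r := r) (R := R)
    (hinv hx) (hinv hy) (by rw [← pow_mul', ← pow_mul', ← pow_add]; exact hinv (by positivity))
    (by rw [← pow_mul']; exact hinv (by positivity))
    (by rw [← pow_mul']; exact hinv (by positivity))
    (by rw [← pow_add]; exact hinv (by positivity))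
  have inv_mul_mul (a b c : ℚ⟦X⟧) : (a * b * c)⁻¹ = a⁻¹ * b⁻¹ * c⁻¹ := by
    simp only [PowerSeries.mul_inv_rev]; ring
  have geom_sum_mem (a m : ℕ) : ∑ i ∈ Ico 1 m, (X ^ a : ℚ⟦X⟧) ^ i ∈ nonnegCoeffSubsemiring ℚ :=
    sum_mem fun i _ => pow_mem (pow_mem X_mem_nonnegCoeffSubsemiring a) i
  rw [inv_mul_mul, inv_mul_mul, key]
  refine mem_nonnegCoeffSubsemiring.mp ?_ n
  exact mul_mem (mul_mem (hmem (by positivity)) (hmem (by positivity)))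
    (add_mem (mul_mem (geom_sum_mem x r) (hmem (by positivity)))
      (mul_mem (geom_sum_mem y R) (hmem (by positivity))))
end

section
/- For all positive integers x, y, r, R, m, L and all i with 1 \leq i \leq L, the power series V(i) = q^{m(i-1)+y}(1-q^{(R-1)y})(1-q^x)(1-q^{m(i-1)+rx}) / [P(i) \cdot Q(L)/Q(i-1)] has nonnegative coefficients, where P(i) = (q^x,q^y,q^{rx+Ry};q^m)_i and Q(i) = (q^{rx},q^{Ry},q^{x+y};q^m)_i. -/
/-!
After cancelling `1 - q^x` against the first factor of `P(i)` and `1 - q^{m(i-1)+rx}` against the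
first factor of `Q(L)/Q(i-1)`, and writing `(1 - q^{(R-1)y}) / (1 - q^y)` as the geometric sum
`∑_{j<R-1} q^{jy}`, `V(i)` becomes a monomial times a polynomial with nonnegative coefficients
times a product of factors `1 / (1 - q^e) = ∑ q^{ke}`. Series with nonnegative coefficients form
a subsemiring, so `V(i)` lies in it.

Degenerate exponents need no separate treatment: a series with zero constant term has inverse `0`
in Mathlib, so a cancelled pair `f * f⁻¹` is `1` or `0`, and `(1 - q^0)⁻¹ = 0`.
-/

open PowerSeries Finset

namespace PowerSeries

section OrderedSemiring

variable (R : Type*) [Semiring R] [PartialOrder R] [IsOrderedRing R]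

def nonnegCoeffs : Subsemiring R⟦X⟧ where
  carrier := {f | ∀ n, 0 ≤ coeff n f}
  mul_mem' {f g} hf hg n := by
    rw [coeff_mul]
    exact sum_nonneg fun p _ => mul_nonneg (hf p.1) (hg p.2)
  one_mem' n := by
    rw [coeff_one]
    split_ifs <;> simp
  add_mem' {f g} hf hg n := by
    rw [map_add]
    exact add_nonneg (hf n) (hg n)
  zero_mem' n := by simp

variable {R}

theorem X_mem_nonnegCoeffs : (X : R⟦X⟧) ∈ nonnegCoeffs R := fun n => by
  rw [coeff_X]
  split_ifs <;> simp

end OrderedSemiring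

section OrderedField

variable {K : Type*} [Field K] [LinearOrder K] [IsStrictOrderedRing K]

theorem mul_inv_self_mem_nonnegCoeffs (f : K⟦X⟧) : f * f⁻¹ ∈ nonnegCoeffs K := by
  by_cases h : constantCoeff f = 0
  · rw [PowerSeries.inv_eq_zero.2 h, mul_zero]
    exact zero_mem _
  · rw [PowerSeries.mul_inv_cancel f h]
    exact one_mem _

theorem one_sub_pow_mul_inv_one_sub_mem_nonnegCoeffs {g : K⟦X⟧} (hg : g ∈ nonnegCoeffs K)
    (n : ℕ) : (1 - g ^ n) * (1 - g)⁻¹ ∈ nonnegCoeffs K := by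
  rw [← geom_sum_mul_neg, mul_assoc]
  exact mul_mem (sum_mem fun i _ => pow_mem hg i) (mul_inv_self_mem_nonnegCoeffs _)

theorem inv_one_sub_mem_nonnegCoeffs {g : K⟦X⟧} (hg : g ∈ nonnegCoeffs K)
    (hg₀ : constantCoeff g = 0) : (1 - g)⁻¹ ∈ nonnegCoeffs K := by
  set ψ := (1 - g)⁻¹
  -- `g` has no constant term, so this expresses `coeff n ψ` through lower coefficients of `ψ`.
  have hψ : ψ = 1 + g * ψ := by
    have : (1 - g) * ψ = 1 := PowerSeries.mul_inv_cancel _ (by simp [hg₀])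
    linear_combination this
  intro n
  induction n using Nat.strong_induction_on with
  | _ n ih =>
    rw [hψ, map_add, coeff_mul]
    refine add_nonneg ((one_mem (nonnegCoeffs K)) n) (sum_nonneg fun p hp => ?_)
    rcases Nat.eq_zero_or_pos p.1 with hp₁ | hp₁
    · simp [hp₁, hg₀]
    · exact mul_nonneg (hg p.1) (ih p.2 (by have := mem_antidiagonal.1 hp; omega))

variable (K)

def invNonnegCoeffs : Submonoid K⟦X⟧ where
  carrier := {f | f⁻¹ ∈ nonnegCoeffs K}
  mul_mem' {f g} hf hg := by
    show (f * g)⁻¹ ∈ nonnegCoeffs K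
    rw [PowerSeries.mul_inv_rev]
    exact mul_mem hg hf
  one_mem' := by
    show (1 : K⟦X⟧)⁻¹ ∈ nonnegCoeffs K
    rw [inv_one]
    exact one_mem _

variable {K}

theorem mem_invNonnegCoeffs {f : K⟦X⟧} : f ∈ invNonnegCoeffs K ↔ f⁻¹ ∈ nonnegCoeffs K :=
  Iff.rfl

theorem one_sub_X_pow_mem_invNonnegCoeffs (e : ℕ) : 1 - X ^ e ∈ invNonnegCoeffs K := by
  rcases e with _ | e
  · simp [mem_invNonnegCoeffs]
  · exact inv_one_sub_mem_nonnegCoeffs (pow_mem X_mem_nonnegCoeffs _) (by simp)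

end OrderedField

/-- `qPochhammer a m n` is `(q^a; q^m)_n`. -/
noncomputable def qPochhammer {R : Type*} [CommRing R] (a m n : ℕ) : R⟦X⟧ :=
  ∏ l ∈ range n, (1 - X ^ (a + l * m))

theorem qPochhammer_succ {R : Type*} [CommRing R] (a m n : ℕ) :
    (qPochhammer a m (n + 1) : R⟦X⟧) = (1 - X ^ a) * qPochhammer (a + m) m n := by
  simp only [qPochhammer, prod_range_succ', zero_mul, add_zero]
  rw [mul_comm]
  congr 1
  exact prod_congr rfl fun l _ => by ring_nf

theorem qPochhammer_mem_invNonnegCoeffs {K : Type*} [Field K] [LinearOrder K]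
    [IsStrictOrderedRing K] (a m n : ℕ) : qPochhammer a m n ∈ invNonnegCoeffs K :=
  prod_mem fun _ _ => one_sub_X_pow_mem_invNonnegCoeffs _

end PowerSeries

theorem V_mem_nonnegCoeffs {K : Type*} [Field K] [LinearOrder K] [IsStrictOrderedRing K]
    (x y r R m a j k : ℕ) :
    (X : K⟦X⟧) ^ (a + y) * (1 - X ^ ((R - 1) * y)) * (1 - X ^ x) * (1 - X ^ (a + r * x)) *
        (qPochhammer x m (j + 1) * qPochhammer y m (j + 1) *
          qPochhammer (r * x + R * y) m (j + 1))⁻¹ *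
        (qPochhammer (a + r * x) m (k + 1) * qPochhammer (a + R * y) m (k + 1) *
          qPochhammer (a + x + y) m (k + 1))⁻¹ ∈ nonnegCoeffs K := by
  have mul_inv (f g : K⟦X⟧) : (f * g)⁻¹ = f⁻¹ * g⁻¹ := by
    rw [PowerSeries.mul_inv_rev, mul_comm]
  have h_cancel :
      (X : K⟦X⟧) ^ (a + y) * (1 - X ^ ((R - 1) * y)) * (1 - X ^ x) * (1 - X ^ (a + r * x)) *
        (qPochhammer x m (j + 1) * qPochhammer y m (j + 1) *
          qPochhammer (r * x + R * y) m (j + 1))⁻¹ *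
        (qPochhammer (a + r * x) m (k + 1) * qPochhammer (a + R * y) m (k + 1) *
          qPochhammer (a + x + y) m (k + 1))⁻¹ =
      X ^ (a + y) * ((1 - (X ^ y) ^ (R - 1)) * (1 - X ^ y)⁻¹) *
        ((1 - X ^ x) * (1 - X ^ x)⁻¹) *
        ((1 - X ^ (a + r * x)) * (1 - X ^ (a + r * x))⁻¹) *
        (qPochhammer (x + m) m j * qPochhammer (y + m) m j *
          qPochhammer (r * x + R * y) m (j + 1) * qPochhammer (a + r * x + m) m k *
          qPochhammer (a + R * y) m (k + 1) * qPochhammer (a + x + y) m (k + 1))⁻¹ := by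
    rw [qPochhammer_succ x, qPochhammer_succ y, qPochhammer_succ (a + r * x)]
    simp only [mul_inv]
    ring
  rw [h_cancel]
  refine mul_mem (mul_mem (mul_mem (mul_mem (pow_mem X_mem_nonnegCoeffs _) ?_)
    (mul_inv_self_mem_nonnegCoeffs _)) (mul_inv_self_mem_nonnegCoeffs _)) ?_
  · exact one_sub_pow_mul_inv_one_sub_mem_nonnegCoeffs (pow_mem X_mem_nonnegCoeffs _) _
  · refine mem_invNonnegCoeffs.1 <|
      mul_mem (mul_mem (mul_mem (mul_mem (mul_mem ?_ ?_) ?_) ?_) ?_) ?_ <;>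
    exact qPochhammer_mem_invNonnegCoeffs _ _ _

theorem V_nonneg_general (x y r R m L i : ℕ) (hi : 1 ≤ i) (n : ℕ) :
    0 ≤ PowerSeries.coeff (R := ℚ) n
      ((X : ℚ⟦X⟧) ^ (m * (i - 1) + y) * (1 - X ^ ((R - 1) * y)) * (1 - X ^ x) *
          (1 - X ^ (m * (i - 1) + r * x)) *
        ((∏ l ∈ range i, (1 - (X : ℚ⟦X⟧) ^ (x + l * m))) *
         (∏ l ∈ range i, (1 - (X : ℚ⟦X⟧) ^ (y + l * m))) *
         (∏ l ∈ range i, (1 - (X : ℚ⟦X⟧) ^ (r * x + R * y + l * m))))⁻¹ *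
        ((∏ l ∈ range (L - i + 1), (1 - (X : ℚ⟦X⟧) ^ (m * (i - 1) + r * x + l * m))) *
         (∏ l ∈ range (L - i + 1), (1 - (X : ℚ⟦X⟧) ^ (m * (i - 1) + R * y + l * m))) *
         (∏ l ∈ range (L - i + 1), (1 - (X : ℚ⟦X⟧) ^ (m * (i - 1) + x + y + l * m))))⁻¹) := by
  obtain ⟨j, rfl⟩ : ∃ j, i = j + 1 := ⟨i - 1, by omega⟩
  exact V_mem_nonnegCoeffs x y r R m (m * (j + 1 - 1)) j (L - (j + 1)) n

theorem V_nonneg (x y r R m L i : ℕ) (hx : 0 < x) (hy : 0 < y)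
    (hr : 0 < r) (hR : 0 < R) (hm : 0 < m) (hi : 1 ≤ i) (hiL : i ≤ L) (n : ℕ) :
    0 ≤ PowerSeries.coeff (R := ℚ) n
      ((X : ℚ⟦X⟧) ^ (m * (i - 1) + y) * (1 - X ^ ((R - 1) * y)) * (1 - X ^ x) *
          (1 - X ^ (m * (i - 1) + r * x)) *
        ((∏ l ∈ range i, (1 - (X : ℚ⟦X⟧) ^ (x + l * m))) *
         (∏ l ∈ range i, (1 - (X : ℚ⟦X⟧) ^ (y + l * m))) *
         (∏ l ∈ range i, (1 - (X : ℚ⟦X⟧) ^ (r * x + R * y + l * m))))⁻¹ *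
        ((∏ l ∈ range (L - i + 1), (1 - (X : ℚ⟦X⟧) ^ (m * (i - 1) + r * x + l * m))) *
         (∏ l ∈ range (L - i + 1), (1 - (X : ℚ⟦X⟧) ^ (m * (i - 1) + R * y + l * m))) *
         (∏ l ∈ range (L - i + 1), (1 - (X : ℚ⟦X⟧) ^ (m * (i - 1) + x + y + l * m))))⁻¹) :=
  V_nonneg_general x y r R m L i hi n
end
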